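/- arXiv:2201.05182 — 3 statements merged into one kernel-verified Lean document; each statement's English description precedes it below -/
import Mathlib

section
/- Let c > 0 and let μ₀ be a Borel probability measure on [0,1] with mean ū₀. Suppose μ̄ ∈ [0,1], set u₁ = U₁(c,μ̄), u₂ = U₂(c,μ̄), define p₁ = μ₀({u₀ ∈ [0,1] : (μ̄ + u₁ − u₂ + u₀ + 1)/4 < 0}) and p₂ = μ₀({u₀ ∈ [0,1] : (μ̄ + u₁ − u₂ + u₀ + 1)/4 > 1}), and assume the fixed-point relation μ̄ = ((1 − p₁ − p₂)(u₁ − u₂ + ū₀ + 1) + 4p₂)/(4 − (1 − p₁ − p₂)). Then p₁ = p₂ = 0; in fact for every u₀ ∈ [0,1] one has 0 ≤ (μ̄ + u₁ − u₂ + u₀ + 1)/4 ≤ 1. -/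
/-- Equilibrium advertisement efficiency of major player 1 in the two-major-player
game, given unit advertisement cost `c` and mean consumer preference `m`. -/
noncomputable def U1 (c m : ℝ) : ℝ :=
  -(m ^ 2 + 2 * c * m - m - c + c ^ 2 -
      Real.sqrt ((c + m) * (c ^ 2 + 5 * c - m ^ 2 + m) * (c - m + 1))) / (2 * c * (c + m))

/-- Equilibrium advertisement efficiency of major player 2 in the two-major-player
game, given unit advertisement cost `c` and mean consumer preference `m`. -/
noncomputable def U2 (c m : ℝ) : ℝ :=
  (m - c + Real.sqrt ((c + m) * (c ^ 2 + 5 * c - m ^ 2 + m) / (c - m + 1))) / (2 * c)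

open MeasureTheory

lemma U_diff_eq (c m : ℝ) (hc : 0 < c) (hm0 : 0 ≤ m) (hm1 : m ≤ 1) :
    U1 c m - U2 c m =
      (1 - 2 * m) * ((c + m) + Real.sqrt ((c + m) * (c ^ 2 + 5 * c - m ^ 2 + m) / (c - m + 1)))
        / (2 * c * (c + m)) := by
  have hcm : 0 < c + m := by linarith
  have hR : 0 < c - m + 1 := by linarith
  have hQ : 0 < c ^ 2 + 5 * c - m ^ 2 + m := by nlinarith
  have hP : 0 ≤ (c + m) * (c ^ 2 + 5 * c - m ^ 2 + m) / (c - m + 1) := by positivity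
  have hs : Real.sqrt ((c + m) * (c ^ 2 + 5 * c - m ^ 2 + m) * (c - m + 1))
      = Real.sqrt ((c + m) * (c ^ 2 + 5 * c - m ^ 2 + m) / (c - m + 1)) * (c - m + 1) := by
    rw [show (c + m) * (c ^ 2 + 5 * c - m ^ 2 + m) * (c - m + 1)
        = ((c + m) * (c ^ 2 + 5 * c - m ^ 2 + m) / (c - m + 1)) * (c - m + 1) ^ 2 by
      field_simp]
    rw [Real.sqrt_mul hP, Real.sqrt_sq hR.le]
  unfold U1 U2
  rw [hs]
  field_simp
  ring

theorem stmt_6 (c : ℝ) (hc : 0 < c)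
    (μ₀ : Measure ℝ) [IsProbabilityMeasure μ₀] (hsupp : μ₀ (Set.Icc (0 : ℝ) 1)ᶜ = 0)
    (ubar₀ : ℝ) (hmean : ubar₀ = ∫ x, x ∂μ₀)
    (m : ℝ) (hm : m ∈ Set.Icc (0 : ℝ) 1)
    (p₁ p₂ : ℝ)
    (hp₁ : p₁ = (μ₀ {u₀ ∈ Set.Icc (0 : ℝ) 1 |
      (m + U1 c m - U2 c m + u₀ + 1) / 4 < 0}).toReal)
    (hp₂ : p₂ = (μ₀ {u₀ ∈ Set.Icc (0 : ℝ) 1 |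
      1 < (m + U1 c m - U2 c m + u₀ + 1) / 4}).toReal)
    (hfix : m = ((1 - p₁ - p₂) * (U1 c m - U2 c m + ubar₀ + 1) + 4 * p₂)
      / (4 - (1 - p₁ - p₂))) :
    p₁ = 0 ∧ p₂ = 0 ∧
    ∀ u₀ ∈ Set.Icc (0 : ℝ) 1,
      0 ≤ (m + U1 c m - U2 c m + u₀ + 1) / 4 ∧
      (m + U1 c m - U2 c m + u₀ + 1) / 4 ≤ 1 := by
  obtain ⟨hm0, hm1⟩ := hm
  have hcm : 0 < c + m := by linarith
  have hK : 0 ≤ (c + m) + Real.sqrt ((c + m) * (c ^ 2 + 5 * c - m ^ 2 + m) / (c - m + 1)) := by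
    positivity
  have hdiff := U_diff_eq c m hc hm0 hm1
  -- sign of U1 - U2
  have hsign1 : m ≤ 1 / 2 → 0 ≤ U1 c m - U2 c m := by
    intro h
    rw [hdiff]
    apply div_nonneg (mul_nonneg (by linarith) hK) (by positivity)
  have hsign2 : 1 / 2 ≤ m → U1 c m - U2 c m ≤ 0 := by
    intro h
    rw [hdiff]
    apply div_nonpos_of_nonpos_of_nonneg (mul_nonpos_of_nonpos_of_nonneg (by linarith) hK)
      (by positivity)
  -- probabilities
  have hp₁nn : 0 ≤ p₁ := hp₁ ▸ ENNReal.toReal_nonneg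
  have hp₂nn : 0 ≤ p₂ := hp₂ ▸ ENNReal.toReal_nonneg
  have hp₁le : p₁ ≤ 1 := by
    rw [hp₁]
    have h1 : μ₀ {u₀ ∈ Set.Icc (0 : ℝ) 1 |
        (m + U1 c m - U2 c m + u₀ + 1) / 4 < 0} ≤ 1 := prob_le_one
    simpa using ENNReal.toReal_mono (by simp) h1
  have hp₂le : p₂ ≤ 1 := by
    rw [hp₂]
    have h1 : μ₀ {u₀ ∈ Set.Icc (0 : ℝ) 1 |
        1 < (m + U1 c m - U2 c m + u₀ + 1) / 4} ≤ 1 := prob_le_one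
    simpa using ENNReal.toReal_mono (by simp) h1
  -- mean bounds
  have hae : ∀ᵐ x ∂μ₀, x ∈ Set.Icc (0 : ℝ) 1 := by
    rw [ae_iff]
    exact hsupp
  have hInt : Integrable (fun x : ℝ => x) μ₀ := by
    apply Integrable.mono' (integrable_const (1 : ℝ)) aestronglyMeasurable_id
    filter_upwards [hae] with x hx
    simp only [id_eq, Real.norm_eq_abs, abs_le]
    exact ⟨by linarith [hx.1], hx.2⟩
  have hub0 : 0 ≤ ubar₀ := by
    rw [hmean]
    apply integral_nonneg_of_ae
    filter_upwards [hae] with x hx using hx.1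
  have hub1 : ubar₀ ≤ 1 := by
    rw [hmean]
    calc ∫ x, x ∂μ₀ ≤ ∫ _, (1 : ℝ) ∂μ₀ := by
          apply integral_mono_ae hInt (integrable_const 1)
          filter_upwards [hae] with x hx using hx.2
      _ = 1 := by simp
  -- rearranged fixed point
  have hden : (0 : ℝ) < 4 - (1 - p₁ - p₂) := by linarith
  rw [eq_div_iff hden.ne'] at hfix
  -- upper bound
  have hup : m + U1 c m - U2 c m ≤ 2 := by
    by_contra h
    push_neg at h
    have hS : {u₀ ∈ Set.Icc (0 : ℝ) 1 | (m + U1 c m - U2 c m + u₀ + 1) / 4 < 0} = ∅ := by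
      apply Set.eq_empty_iff_forall_notMem.2
      rintro u ⟨⟨h0, h1⟩, hlt⟩
      nlinarith
    have hp1z : p₁ = 0 := by rw [hp₁, hS]; simp
    subst hp1z
    have hm34 : 3 / 4 ≤ m := by
      nlinarith [mul_nonneg (show (0 : ℝ) ≤ 1 - p₂ by linarith)
        (show (0 : ℝ) ≤ U1 c m - U2 c m + ubar₀ + 1 - (3 - m) by linarith)]
    have := hsign2 (by linarith)
    linarith
  -- lower bound
  have hlo : -1 ≤ m + U1 c m - U2 c m := by
    by_contra h
    push_neg at h
    have hS : {u₀ ∈ Set.Icc (0 : ℝ) 1 | 1 < (m + U1 c m - U2 c m + u₀ + 1) / 4} = ∅ := by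
      apply Set.eq_empty_iff_forall_notMem.2
      rintro u ⟨⟨h0, h1⟩, hlt⟩
      nlinarith
    have hp2z : p₂ = 0 := by rw [hp₂, hS]; simp
    subst hp2z
    have hm14 : m ≤ 1 / 4 := by
      nlinarith [mul_nonneg (show (0 : ℝ) ≤ 1 - p₁ by linarith)
        (show (0 : ℝ) ≤ (1 - m) - (U1 c m - U2 c m + ubar₀ + 1) by linarith),
        mul_nonneg hp₁nn (show (0 : ℝ) ≤ 1 - m by linarith),
        mul_nonneg hm0 hp₁nn]
    have := hsign1 (by linarith)
    linarith
  -- conclusions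
  have hbnd : ∀ u₀ ∈ Set.Icc (0 : ℝ) 1,
      0 ≤ (m + U1 c m - U2 c m + u₀ + 1) / 4 ∧
      (m + U1 c m - U2 c m + u₀ + 1) / 4 ≤ 1 := by
    rintro u ⟨h0, h1⟩
    exact ⟨by linarith, by linarith⟩
  refine ⟨?_, ?_, hbnd⟩
  · have hS : {u₀ ∈ Set.Icc (0 : ℝ) 1 | (m + U1 c m - U2 c m + u₀ + 1) / 4 < 0} = ∅ := by
      apply Set.eq_empty_iff_forall_notMem.2
      rintro u ⟨hu, hlt⟩
      exact absurd hlt (not_lt.2 (hbnd u hu).1)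
    rw [hp₁, hS]; simp
  · have hS : {u₀ ∈ Set.Icc (0 : ℝ) 1 | 1 < (m + U1 c m - U2 c m + u₀ + 1) / 4} = ∅ := by
      apply Set.eq_empty_iff_forall_notMem.2
      rintro u ⟨hu, hlt⟩
      exact absurd hlt (not_lt.2 (hbnd u hu).2)
    rw [hp₂, hS]; simp
end

section
/- For every c > 0 and every ū₀ ∈ [0,1], the function f(μ̄) = μ̄ − (U₁(c,μ̄) − U₂(c,μ̄) + 1 + ū₀)/3 is strictly increasing on the interval [0,1]. -/
lemma diff_eq (c m : ℝ) (hc : 0 < c) (hm : m ∈ Set.Icc (0:ℝ) 1) :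
    U1 c m - U2 c m =
      (1 - 2*m)/(2*c) * (1 + Real.sqrt (1 + 4*c/((c+m)*(c-m+1)))) := by
  obtain ⟨hm0, hm1⟩ := hm
  have hcm : 0 < c + m := by linarith
  have hcm1 : 0 < c - m + 1 := by linarith
  have hP : 0 < (c+m)*(c-m+1) := mul_pos hcm hcm1
  have h1 : (c + m) * (c ^ 2 + 5 * c - m ^ 2 + m) * (c - m + 1)
      = ((c+m)*(c-m+1))^2 * (1 + 4*c/((c+m)*(c-m+1))) := by
    field_simp
    ring
  have h2 : (c + m) * (c ^ 2 + 5 * c - m ^ 2 + m) / (c - m + 1)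
      = (c+m)^2 * (1 + 4*c/((c+m)*(c-m+1))) := by
    field_simp
    ring
  rw [U1, U2, h1, h2, Real.sqrt_mul (sq_nonneg _), Real.sqrt_sq hP.le,
    Real.sqrt_mul (sq_nonneg _), Real.sqrt_sq hcm.le]
  field_simp
  ring

theorem stmt_7 (c ubar₀ : ℝ) (hc : 0 < c) (h₀ : ubar₀ ∈ Set.Icc (0 : ℝ) 1) :
    StrictMonoOn (fun m : ℝ => m - (U1 c m - U2 c m + 1 + ubar₀) / 3)
      (Set.Icc (0 : ℝ) 1) := by
  intro a ha b hb hab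
  simp only
  have key : U1 c b - U2 c b ≤ U1 c a - U2 c a := by
    rw [diff_eq c a hc ha, diff_eq c b hc hb]
    obtain ⟨ha0, ha1⟩ := ha
    obtain ⟨hb0, hb1⟩ := hb
    have hPa : 0 < (c+a)*(c-a+1) := mul_pos (by linarith) (by linarith)
    have hPb : 0 < (c+b)*(c-b+1) := mul_pos (by linarith) (by linarith)
    set sa := Real.sqrt (1 + 4*c/((c+a)*(c-a+1))) with hsa
    set sb := Real.sqrt (1 + 4*c/((c+b)*(c-b+1))) with hsb
    have hsa0 : 0 ≤ sa := Real.sqrt_nonneg _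
    have hsb0 : 0 ≤ sb := Real.sqrt_nonneg _
    have main : (1 - 2*b) * (1 + sb) ≤ (1 - 2*a) * (1 + sa) := by
      rcases le_or_gt b (1/2) with hb2 | hb2
      · -- both ≤ 1/2 : P a ≤ P b hence sb ≤ sa
        have hPle : (c+a)*(c-a+1) ≤ (c+b)*(c-b+1) := by nlinarith
        have hsle : sb ≤ sa := by
          apply Real.sqrt_le_sqrt
          have : 4*c/((c+b)*(c-b+1)) ≤ 4*c/((c+a)*(c-a+1)) :=
            div_le_div_of_nonneg_left (by linarith) hPa hPle
          linarith
        nlinarith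
      · rcases le_or_gt (1/2) a with ha2 | ha2
        · -- both ≥ 1/2 : P b ≤ P a hence sa ≤ sb
          have hPle : (c+b)*(c-b+1) ≤ (c+a)*(c-a+1) := by nlinarith
          have hsle : sa ≤ sb := by
            apply Real.sqrt_le_sqrt
            have : 4*c/((c+a)*(c-a+1)) ≤ 4*c/((c+b)*(c-b+1)) :=
              div_le_div_of_nonneg_left (by linarith) hPb hPle
            linarith
          nlinarith
        · -- a < 1/2 < b
          nlinarith
    have h2c : 0 < 2*c := by linarith
    rw [div_mul_eq_mul_div, div_mul_eq_mul_div, div_le_div_iff₀ h2c h2c]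
    nlinarith
  linarith
end

section
/- Let c > 0, ū₀ ∈ [0,1], and let μ̄* be the unique μ̄ ∈ [0,1] satisfying μ̄ = (U₁(c,μ̄) − U₂(c,μ̄) + 1 + ū₀)/3. Then |μ̄* − 1/2| ≤ |ū₀ − 1/2|, with strict inequality whenever ū₀ ≠ 1/2; moreover 0 < μ̄* < 1, so the equilibrium market shares are never polarized. -/
theorem Real.sqrt_mul_eq_mul_sqrt_div (x : ℝ) {d : ℝ} (hd : 0 < d) :
    √(x * d) = d * √(x / d) := by
  rw [show x * d = x / d * d ^ 2 by field_simp, Real.sqrt_mul' _ (sq_nonneg d),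
    Real.sqrt_sq hd.le, mul_comm]

theorem mul_abs_le_abs_of_mul_eq {a b k r : ℝ} (hr : 0 ≤ r) (hrk : r ≤ k) (h : a * k = b) :
    r * |a| ≤ |b| := by
  rw [← h, abs_mul, abs_of_nonneg (hr.trans hrk), mul_comm]
  exact mul_le_mul_of_nonneg_left hrk (abs_nonneg a)

noncomputable def efficiencyGapSlope (c m : ℝ) : ℝ :=
  (m + c + √((c + m) * (c ^ 2 + 5 * c - m ^ 2 + m) / (c - m + 1))) / (2 * c * (c + m))

theorem efficiencyGapSlope_pos {c m : ℝ} (hc : 0 < c) (hcm : 0 < c + m) :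
    0 < efficiencyGapSlope c m := by
  unfold efficiencyGapSlope
  have : 0 < m + c := by linarith
  positivity

theorem U1_sub_U2 {c m : ℝ} (hc : c ≠ 0) (hcm : c + m ≠ 0) (hd : 0 < c - m + 1) :
    U1 c m - U2 c m = (1 - 2 * m) * efficiencyGapSlope c m := by
  rw [U1, U2, efficiencyGapSlope, Real.sqrt_mul_eq_mul_sqrt_div _ hd]
  field_simp
  ring

theorem stmt_10 (c ubar₀ mstar : ℝ) (hc : 0 < c) (h₀ : ubar₀ ∈ Set.Icc (0 : ℝ) 1)
    (hmem : mstar ∈ Set.Icc (0 : ℝ) 1)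
    (hfix : mstar = (U1 c mstar - U2 c mstar + 1 + ubar₀) / 3) :
    |mstar - 1 / 2| ≤ |ubar₀ - 1 / 2| ∧
    (ubar₀ ≠ 1 / 2 → |mstar - 1 / 2| < |ubar₀ - 1 / 2|) ∧
    0 < mstar ∧ mstar < 1 := by
  obtain ⟨hm0, hm1⟩ := hmem
  have hcm : 0 < c + mstar := by linarith
  have hK := efficiencyGapSlope_pos hc hcm
  rw [U1_sub_U2 hc.ne' hcm.ne' (by linarith)] at hfix
  have hkey : (mstar - 1 / 2) * (3 + 2 * efficiencyGapSlope c mstar) = ubar₀ - 1 / 2 := by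
    linear_combination 3 * hfix
  have hcontract : 3 * |mstar - 1 / 2| ≤ |ubar₀ - 1 / 2| :=
    mul_abs_le_abs_of_mul_eq (by norm_num) (by linarith) hkey
  have hu : |ubar₀ - 1 / 2| ≤ 1 / 2 := abs_le.2 ⟨by linarith [h₀.1], by linarith [h₀.2]⟩
  have hm : |mstar - 1 / 2| ≤ 1 / 6 := by linarith
  have habs_nonneg := abs_nonneg (mstar - 1 / 2)
  refine ⟨by linarith, fun hne => ?_, by linarith [(abs_le.1 hm).1], by linarith [(abs_le.1 hm).2]⟩
  have := abs_pos.2 (sub_ne_zero.2 hne)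
  linarith
end
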